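/- (Mapping property of B_1) Let θ > 3/2. Then for every t ∈ ℝ the bilinear operator B_1 maps Ḣ^0 × Ḣ^0 into Ḣ^{−θ} and satisfies ‖B_1(φ,ψ)‖_{Ḣ^{−θ}} ≤ C(θ) ‖φ‖_{Ḣ^0} ‖ψ‖_{Ḣ^0}, with a constant C(θ) independent of t. -/
import Mathlib


open MeasureTheory Set

noncomputable section

/-- The weight `|k|^(2s)` appearing in the `Ḣ^s` norm. -/
def wt (s : ℝ) (k : ℤ) : ℝ := ((|k| : ℤ) : ℝ) ^ (2 * s)

/-- Membership in the homogeneous Sobolev space `Ḣ^s` of sequences indexed by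
nonzero integers. -/
def memH (s : ℝ) (u : ℤ → ℂ) : Prop :=
  Summable (fun k : {k : ℤ // k ≠ 0} => wt s k.1 * ‖u k.1‖ ^ 2)

/-- The `Ḣ^s` norm. -/
def hnorm (s : ℝ) (u : ℤ → ℂ) : ℝ :=
  Real.sqrt (∑' k : {k : ℤ // k ≠ 0}, wt s k.1 * ‖u k.1‖ ^ 2)

/-- The `(Ḣ^s)²` norm of a pair. -/
def hnorm2 (s : ℝ) (u v : ℤ → ℂ) : ℝ :=
  Real.sqrt (hnorm s u ^ 2 + hnorm s v ^ 2)

/-- The conserved energy functional `𝓔(u,v) = 2‖u‖² + 2‖v‖² + ‖u-v‖²` (in `Ḣ^0`). -/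
def energyE (u v : ℤ → ℂ) : ℝ :=
  2 * hnorm 0 u ^ 2 + 2 * hnorm 0 v ^ 2 + hnorm 0 (fun k => u k - v k) ^ 2

/-- Projection `𝒫` onto the low Fourier modes `|k| ≤ N`. -/
def Plow (N : ℕ) (u : ℤ → ℂ) : ℤ → ℂ := fun k => if |k| ≤ (N : ℤ) then u k else 0

/-- Projection `𝒬 = I - 𝒫` onto the high Fourier modes `|k| > N`. -/
def Qhigh (N : ℕ) (u : ℤ → ℂ) : ℤ → ℂ := fun k => if |k| ≤ (N : ℤ) then 0 else u k

/-- The oscillating factor `e^{3 i k k₁ k₂ t}` with `k₂ = k - k₁`. -/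
def osc2 (t : ℝ) (k k1 : ℤ) : ℂ :=
  Complex.exp (3 * Complex.I * (k : ℂ) * (k1 : ℂ) * ((k - k1 : ℤ) : ℂ) * (t : ℂ))

/-- The oscillating factor `e^{3 i (k₁+k₂)(k₂+k₃)(k₁+k₃) t}`. -/
def osc3 (t : ℝ) (k1 k2 k3 : ℤ) : ℂ :=
  Complex.exp (3 * Complex.I * ((k1 + k2 : ℤ) : ℂ) * ((k2 + k3 : ℤ) : ℂ) *
    ((k1 + k3 : ℤ) : ℂ) * (t : ℂ))

/-- The bilinear operator `B₁` at time `t`. -/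
def B1 (t : ℝ) (φ ψ : ℤ → ℂ) : ℤ → ℂ := fun k =>
  Complex.I * (k : ℂ) / 2 *
    ∑' k1 : ℤ, if k1 ≠ 0 ∧ k - k1 ≠ 0 then osc2 t k k1 * φ k1 * ψ (k - k1) else 0

/-- The bilinear operator `B₂` at time `t`. -/
def B2 (t : ℝ) (φ ψ : ℤ → ℂ) : ℤ → ℂ := fun k =>
  (1 / 6 : ℂ) *
    ∑' k1 : ℤ, if k1 ≠ 0 ∧ k - k1 ≠ 0 then
      osc2 t k k1 * φ k1 * ψ (k - k1) / ((k1 : ℂ) * ((k - k1 : ℤ) : ℂ)) else 0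

/-- The trilinear operator `R₃` at time `t`. -/
def R3 (t : ℝ) (φ ψ ξ : ℤ → ℂ) : ℤ → ℂ := fun k =>
  ∑' p : ℤ × ℤ,
    if p.1 ≠ 0 ∧ p.2 ≠ 0 ∧ k - p.1 - p.2 ≠ 0 then
      osc3 t p.1 p.2 (k - p.1 - p.2) * φ p.1 * ψ p.2 * ξ (k - p.1 - p.2) / (p.1 : ℂ)
    else 0

/-- The resonant part `R₃res` (sum over `(k₁+k₂)(k₂+k₃)(k₁+k₃) = 0`). -/
def R3res (φ ψ ξ : ℤ → ℂ) : ℤ → ℂ := fun k =>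
  ∑' p : ℤ × ℤ,
    if p.1 ≠ 0 ∧ p.2 ≠ 0 ∧ k - p.1 - p.2 ≠ 0 ∧
        (p.1 + p.2) * (p.2 + (k - p.1 - p.2)) * (p.1 + (k - p.1 - p.2)) = 0 then
      φ p.1 * ψ p.2 * ξ (k - p.1 - p.2) / (p.1 : ℂ)
    else 0

/-- The nonresonant part `R₃nres` (sum over `(k₁+k₂)(k₂+k₃)(k₁+k₃) ≠ 0`). -/
def R3nres (t : ℝ) (φ ψ ξ : ℤ → ℂ) : ℤ → ℂ := fun k =>
  ∑' p : ℤ × ℤ,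
    if p.1 ≠ 0 ∧ p.2 ≠ 0 ∧ k - p.1 - p.2 ≠ 0 ∧
        (p.1 + p.2) * (p.2 + (k - p.1 - p.2)) * (p.1 + (k - p.1 - p.2)) ≠ 0 then
      osc3 t p.1 p.2 (k - p.1 - p.2) * φ p.1 * ψ p.2 * ξ (k - p.1 - p.2) / (p.1 : ℂ)
    else 0

/-- The operator `R₃nres1(φ,ψ,ξ) = R₃nres(φ,𝒫ψ,ξ) + R₃nres(φ,𝒬ψ,𝒫ξ)`. -/
def R3nres1 (N : ℕ) (t : ℝ) (φ ψ ξ : ℤ → ℂ) : ℤ → ℂ := fun k =>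
  R3nres t φ (Plow N ψ) ξ k + R3nres t φ (Qhigh N ψ) (Plow N ξ) k

/-- The trilinear operator `B₃` (nonresonant indices). -/
def B3 (t : ℝ) (φ ψ ξ : ℤ → ℂ) : ℤ → ℂ := fun k =>
  ∑' p : ℤ × ℤ,
    if p.1 ≠ 0 ∧ p.2 ≠ 0 ∧ k - p.1 - p.2 ≠ 0 ∧
        (p.1 + p.2) * (p.2 + (k - p.1 - p.2)) * (p.1 + (k - p.1 - p.2)) ≠ 0 then
      osc3 t p.1 p.2 (k - p.1 - p.2) * φ p.1 * ψ p.2 * ξ (k - p.1 - p.2) /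
        ((p.1 : ℂ) * ((p.1 + p.2 : ℤ) : ℂ) * ((p.2 + (k - p.1 - p.2) : ℤ) : ℂ) *
          ((p.1 + (k - p.1 - p.2) : ℤ) : ℂ))
    else 0

/-- The operator `B₃₀(φ,ψ,ξ) = B₃(φ,𝒬ψ,𝒬ξ)`. -/
def B30 (N : ℕ) (t : ℝ) (φ ψ ξ : ℤ → ℂ) : ℤ → ℂ :=
  B3 t φ (Qhigh N ψ) (Qhigh N ξ)

/-- The phase `Φ(k₁,k₂,k₃,k₄) = (k₁+k₂+k₃+k₄)³ - k₁³ - k₂³ - k₃³ - k₄³`. -/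
def Phi4 (k1 k2 k3 k4 : ℤ) : ℤ :=
  (k1 + k2 + k3 + k4) ^ 3 - k1 ^ 3 - k2 ^ 3 - k3 ^ 3 - k4 ^ 3

/-- The oscillating factor `e^{i Φ(k₁,k₂,k₃,k₄) t}`. -/
def osc4 (t : ℝ) (k1 k2 k3 k4 : ℤ) : ℂ :=
  Complex.exp (Complex.I * ((Phi4 k1 k2 k3 k4 : ℤ) : ℂ) * (t : ℂ))

/-- The quadrilinear operator `B₄¹`. -/
def B41 (t : ℝ) (φ ψ ξ η : ℤ → ℂ) : ℤ → ℂ := fun k =>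
  ∑' q : ℤ × ℤ × ℤ,
    let k1 := q.1; let k2 := q.2.1; let k3 := q.2.2; let k4 := k - k1 - k2 - k3
    if k1 ≠ 0 ∧ k2 ≠ 0 ∧ k3 ≠ 0 ∧ k4 ≠ 0 ∧
        (k1 + k2) * (k1 + k3 + k4) * (k2 + k3 + k4) ≠ 0 then
      osc4 t k1 k2 k3 k4 * φ k1 * ψ k2 * ξ k3 * η k4 /
        (((k1 + k2 : ℤ) : ℂ) * ((k1 + k3 + k4 : ℤ) : ℂ) * ((k2 + k3 + k4 : ℤ) : ℂ))
    else 0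

/-- The quadrilinear operator `B₄²`. -/
def B42 (t : ℝ) (φ ψ ξ η : ℤ → ℂ) : ℤ → ℂ := fun k =>
  ∑' q : ℤ × ℤ × ℤ,
    let k1 := q.1; let k2 := q.2.1; let k3 := q.2.2; let k4 := k - k1 - k2 - k3
    if k1 ≠ 0 ∧ k2 ≠ 0 ∧ k3 ≠ 0 ∧ k4 ≠ 0 ∧
        (k1 + k2) * (k1 + k3 + k4) * (k2 + k3 + k4) ≠ 0 then
      osc4 t k1 k2 k3 k4 * ((k3 + k4 : ℤ) : ℂ) * φ k1 * ψ k2 * ξ k3 * η k4 /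
        ((k1 : ℂ) * ((k1 + k2 : ℤ) : ℂ) * ((k1 + k3 + k4 : ℤ) : ℂ) *
          ((k2 + k3 + k4 : ℤ) : ℂ))
    else 0

/-- The quadrilinear operator `B₄ = B₄¹ + B₄²`. -/
def B4 (t : ℝ) (φ ψ ξ η : ℤ → ℂ) : ℤ → ℂ := fun k =>
  B41 t φ ψ ξ η k + B42 t φ ψ ξ η k

/-- Right-hand side (before the `ik/2` factor and integration) of the `u`-equation
of the transformed Majda–Biello system. -/
def mbRHSu (u v : ℝ → ℤ → ℂ) (τ : ℝ) (k : ℤ) : ℂ :=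
  ∑' k1 : ℤ, if k1 ≠ 0 ∧ k - k1 ≠ 0 then
    osc2 τ k k1 * (u τ k1 * v τ (k - k1) - u τ k1 * u τ (k - k1)) else 0

/-- Right-hand side (before the `ik/2` factor and integration) of the `v`-equation
of the transformed Majda–Biello system. -/
def mbRHSv (u v : ℝ → ℤ → ℂ) (τ : ℝ) (k : ℤ) : ℂ :=
  ∑' k1 : ℤ, if k1 ≠ 0 ∧ k - k1 ≠ 0 then
    osc2 τ k k1 * (u τ k1 * v τ (k - k1) - v τ k1 * v τ (k - k1)) else 0

/-- `(u,v)` is a solution of the transformed Majda–Biello system on `[0,T]`: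
it belongs to `L^∞([0,T];(Ḣ^0)²)` and satisfies the integrated equations. -/
def IsMBSolution (T : ℝ) (u v : ℝ → ℤ → ℂ) : Prop :=
  (∃ M : ℝ, ∀ t ∈ Icc (0 : ℝ) T,
      memH 0 (u t) ∧ memH 0 (v t) ∧ hnorm2 0 (u t) (v t) ≤ M) ∧
  ∀ k : ℤ, k ≠ 0 → ∀ t ∈ Icc (0 : ℝ) T,
    (u t k - u 0 k = Complex.I * (k : ℂ) / 2 * (∫ τ in (0 : ℝ)..t, mbRHSu u v τ k)) ∧
    (v t k - v 0 k = Complex.I * (k : ℂ) / 2 * (∫ τ in (0 : ℝ)..t, mbRHSv u v τ k))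

/-- The (finite) right-hand side of the `u`-equation of the `N`-th Galerkin system. -/
def galRHSu (N : ℕ) (t : ℝ) (f g : ℤ → ℂ) (k : ℤ) : ℂ :=
  Complex.I * (k : ℂ) / 2 * ∑ k1 ∈ Finset.Icc (-(N : ℤ)) (N : ℤ),
    (if k1 ≠ 0 ∧ k - k1 ≠ 0 ∧ |k - k1| ≤ (N : ℤ) then
      osc2 t k k1 * (f k1 * g (k - k1) - f k1 * f (k - k1)) else 0)

/-- The (finite) right-hand side of the `v`-equation of the `N`-th Galerkin system. -/
def galRHSv (N : ℕ) (t : ℝ) (f g : ℤ → ℂ) (k : ℤ) : ℂ :=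
  Complex.I * (k : ℂ) / 2 * ∑ k1 ∈ Finset.Icc (-(N : ℤ)) (N : ℤ),
    (if k1 ≠ 0 ∧ k - k1 ≠ 0 ∧ |k - k1| ≤ (N : ℤ) then
      osc2 t k k1 * (f k1 * g (k - k1) - g k1 * g (k - k1)) else 0)

/-- `(u,v)` solves the `N`-th Galerkin system on the set `S` with initial data
`(uin, vin)`. -/
def IsGalerkinSolution (N : ℕ) (uin vin : ℤ → ℂ) (S : Set ℝ) (u v : ℝ → ℤ → ℂ) : Prop :=
  (∀ k : ℤ, k ≠ 0 → u 0 k = uin k ∧ v 0 k = vin k) ∧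
  ∀ t ∈ S, ∀ k : ℤ, k ≠ 0 →
    HasDerivWithinAt (fun τ : ℝ => u τ k)
      (if |k| ≤ (N : ℤ) then galRHSu N t (u t) (v t) k else 0) S t ∧
    HasDerivWithinAt (fun τ : ℝ => v τ k)
      (if |k| ≤ (N : ℤ) then galRHSv N t (u t) (v t) k else 0) S t

lemma norm_osc2 (t : ℝ) (k k1 : ℤ) : ‖osc2 t k k1‖ = 1 := by
  have h : (3 * Complex.I * (k : ℂ) * (k1 : ℂ) * ((k - k1 : ℤ) : ℂ) * (t : ℂ))
      = ((3 * (k : ℝ) * (k1 : ℝ) * ((k : ℝ) - (k1 : ℝ)) * t : ℝ) : ℂ) * Complex.I := by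
    push_cast; ring
  rw [osc2, h, Complex.norm_exp_ofReal_mul_I]

lemma hnorm_nonneg (s : ℝ) (u : ℤ → ℂ) : 0 ≤ hnorm s u := Real.sqrt_nonneg _

lemma summable_ind_of_memH0 {u : ℤ → ℂ} (hu : memH 0 u) :
    Summable (fun m : ℤ => if m ≠ 0 then ‖u m‖ ^ 2 else 0) := by
  have h1 : Summable (fun k : {k : ℤ // k ≠ 0} => ‖u k.1‖ ^ 2) := by
    have h := hu
    simp only [memH, wt, mul_zero, Real.rpow_zero, one_mul] at h
    exact h
  have h2 : Summable (Set.indicator {k : ℤ | k ≠ 0} (fun m => ‖u m‖ ^ 2)) :=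
    summable_subtype_iff_indicator.mp h1
  refine h2.congr fun m => ?_
  by_cases h : m = 0 <;> simp [Set.indicator_apply, h]

lemma hnorm0_sq (u : ℤ → ℂ) (hu : memH 0 u) :
    hnorm 0 u ^ 2 = ∑' m : ℤ, (if m ≠ 0 then ‖u m‖ ^ 2 else 0) := by
  have h0 : hnorm 0 u ^ 2 = ∑' k : {k : ℤ // k ≠ 0}, wt 0 k.1 * ‖u k.1‖ ^ 2 := by
    rw [hnorm, Real.sq_sqrt]
    exact tsum_nonneg fun k => mul_nonneg (Real.rpow_nonneg (by positivity) _) (sq_nonneg _)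
  rw [h0]
  have h1 : ∑' k : {k : ℤ // k ≠ 0}, wt 0 k.1 * ‖u k.1‖ ^ 2
      = ∑' k : {k : ℤ | k ≠ 0}, (fun m => ‖u m‖ ^ 2) k.1 := by
    refine tsum_congr fun k => ?_
    simp [wt]
  rw [h1, tsum_subtype {k : ℤ | k ≠ 0} (fun m => ‖u m‖ ^ 2)]
  refine tsum_congr fun m => ?_
  by_cases h : m = 0 <;> simp [Set.indicator_apply, h]

lemma cs_bound (φ ψ : ℤ → ℂ) (hφ : memH 0 φ) (hψ : memH 0 ψ) (k : ℤ) :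
    Summable (fun k1 : ℤ => if k1 ≠ 0 ∧ k - k1 ≠ 0 then ‖φ k1‖ * ‖ψ (k - k1)‖ else 0) ∧
    (∑' k1 : ℤ, if k1 ≠ 0 ∧ k - k1 ≠ 0 then ‖φ k1‖ * ‖ψ (k - k1)‖ else 0)
      ≤ hnorm 0 φ * hnorm 0 ψ := by
  have hg0 : ∀ k1 : ℤ,
      0 ≤ (if k1 ≠ 0 ∧ k - k1 ≠ 0 then ‖φ k1‖ * ‖ψ (k - k1)‖ else 0) := by
    intro k1; split
    · positivity
    · exact le_refl 0
  have hfφ := summable_ind_of_memH0 hφ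
  have hfψ := summable_ind_of_memH0 hψ
  have hA2 := hnorm0_sq φ hφ
  have hB2 := hnorm0_sq ψ hψ
  have key : ∀ s : Finset ℤ,
      (∑ k1 ∈ s, if k1 ≠ 0 ∧ k - k1 ≠ 0 then ‖φ k1‖ * ‖ψ (k - k1)‖ else 0)
        ≤ hnorm 0 φ * hnorm 0 ψ := by
    intro s
    have hab : ∀ k1 : ℤ,
        (if k1 ≠ 0 ∧ k - k1 ≠ 0 then ‖φ k1‖ * ‖ψ (k - k1)‖ else 0)
          = (if k1 ≠ 0 then ‖φ k1‖ else 0) * (if k - k1 ≠ 0 then ‖ψ (k - k1)‖ else 0) := by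
      intro k1
      by_cases h1 : k1 = 0 <;> by_cases h2 : k - k1 = 0 <;> simp [h1, h2]
    have ha : (∑ k1 ∈ s, (if k1 ≠ 0 then ‖φ k1‖ else 0) ^ 2) ≤ hnorm 0 φ ^ 2 := by
      have e : ∀ k1 : ℤ, (if k1 ≠ 0 then ‖φ k1‖ else 0) ^ 2
          = (if k1 ≠ 0 then ‖φ k1‖ ^ 2 else 0) := by
        intro k1; by_cases h : k1 = 0 <;> simp [h]
      rw [Finset.sum_congr rfl fun k1 _ => e k1, hA2]
      exact Summable.sum_le_tsum s (fun i _ => by split <;> positivity) hfφ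
    have hb : (∑ k1 ∈ s, (if k - k1 ≠ 0 then ‖ψ (k - k1)‖ else 0) ^ 2) ≤ hnorm 0 ψ ^ 2 := by
      have e : ∀ k1 : ℤ, (if k - k1 ≠ 0 then ‖ψ (k - k1)‖ else 0) ^ 2
          = (fun m : ℤ => if m ≠ 0 then ‖ψ m‖ ^ 2 else 0) (k - k1) := by
        intro k1; by_cases h : k - k1 = 0 <;> simp [h]
      rw [Finset.sum_congr rfl fun k1 _ => e k1]
      have hinj : ∀ x ∈ s, ∀ y ∈ s, k - x = k - y → x = y := fun a _ b _ h => by omega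
      have e2 : ∑ k1 ∈ s, (fun m : ℤ => if m ≠ 0 then ‖ψ m‖ ^ 2 else 0) (k - k1)
          = ∑ m ∈ s.image (fun k1 : ℤ => k - k1), (if m ≠ 0 then ‖ψ m‖ ^ 2 else 0) :=
        (Finset.sum_image (f := fun m : ℤ => if m ≠ 0 then ‖ψ m‖ ^ 2 else 0) hinj).symm
      rw [e2, hB2]
      exact Summable.sum_le_tsum _ (fun i _ => by split <;> positivity) hfψ
    calc (∑ k1 ∈ s, if k1 ≠ 0 ∧ k - k1 ≠ 0 then ‖φ k1‖ * ‖ψ (k - k1)‖ else 0)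
        = ∑ k1 ∈ s, (if k1 ≠ 0 then ‖φ k1‖ else 0) * (if k - k1 ≠ 0 then ‖ψ (k - k1)‖ else 0) :=
          Finset.sum_congr rfl fun k1 _ => hab k1
      _ ≤ Real.sqrt (∑ k1 ∈ s, (if k1 ≠ 0 then ‖φ k1‖ else 0) ^ 2) *
            Real.sqrt (∑ k1 ∈ s, (if k - k1 ≠ 0 then ‖ψ (k - k1)‖ else 0) ^ 2) :=
          Real.sum_mul_le_sqrt_mul_sqrt s _ _
      _ ≤ Real.sqrt (hnorm 0 φ ^ 2) * Real.sqrt (hnorm 0 ψ ^ 2) := by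
          gcongr
      _ = hnorm 0 φ * hnorm 0 ψ := by
          rw [Real.sqrt_sq (hnorm_nonneg 0 φ), Real.sqrt_sq (hnorm_nonneg 0 ψ)]
  have hsum := summable_of_sum_le hg0 key
  exact ⟨hsum, Summable.tsum_le_of_sum_le hsum key⟩

lemma b1_pointwise (t : ℝ) (φ ψ : ℤ → ℂ) (hφ : memH 0 φ) (hψ : memH 0 ψ) (k : ℤ) :
    ‖B1 t φ ψ k‖ ≤ |(k : ℝ)| / 2 * (hnorm 0 φ * hnorm 0 ψ) := by
  obtain ⟨hsum, hle⟩ := cs_bound φ ψ hφ hψ k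
  have hnt : ∀ k1 : ℤ,
      ‖(if k1 ≠ 0 ∧ k - k1 ≠ 0 then osc2 t k k1 * φ k1 * ψ (k - k1) else 0)‖
        = (if k1 ≠ 0 ∧ k - k1 ≠ 0 then ‖φ k1‖ * ‖ψ (k - k1)‖ else 0) := by
    intro k1
    by_cases h : k1 ≠ 0 ∧ k - k1 ≠ 0
    · rw [if_pos h, if_pos h, norm_mul, norm_mul, norm_osc2, one_mul]
    · simp [h]
  have hsum2 : Summable (fun k1 : ℤ =>
      ‖(if k1 ≠ 0 ∧ k - k1 ≠ 0 then osc2 t k k1 * φ k1 * ψ (k - k1) else 0)‖) :=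
    hsum.congr fun k1 => (hnt k1).symm
  have h1 : ‖∑' k1 : ℤ, (if k1 ≠ 0 ∧ k - k1 ≠ 0 then osc2 t k k1 * φ k1 * ψ (k - k1) else 0)‖
      ≤ hnorm 0 φ * hnorm 0 ψ := by
    refine (norm_tsum_le_tsum_norm hsum2).trans ?_
    rw [tsum_congr hnt]
    exact hle
  have h2 : ‖Complex.I * (k : ℂ) / 2‖ = |(k : ℝ)| / 2 := by
    simp
  rw [B1, norm_mul, h2]
  exact mul_le_mul_of_nonneg_left h1 (by positivity)

/-- Mapping property of `B₁`. -/
theorem b1_mapping (θ : ℝ) (hθ : 3 / 2 < θ) :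
    ∃ C : ℝ, ∀ t : ℝ, ∀ φ ψ : ℤ → ℂ, memH 0 φ → memH 0 ψ →
      memH (-θ) (B1 t φ ψ) ∧
      hnorm (-θ) (B1 t φ ψ) ≤ C * hnorm 0 φ * hnorm 0 ψ := by
  have hsumr : Summable (fun k : {k : ℤ // k ≠ 0} => |(k.1 : ℝ)| ^ (2 - 2 * θ)) := by
    have h0 : Summable (fun n : ℤ => |(n : ℝ)| ^ (-(2 * θ - 2))) :=
      Real.summable_abs_int_rpow (by linarith)
    have h1 : Summable (fun n : ℤ => |(n : ℝ)| ^ (2 - 2 * θ)) := by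
      refine h0.congr fun n => ?_
      congr 1; ring
    exact (h1.subtype _).congr fun k => rfl
  set D : ℝ := ∑' k : {k : ℤ // k ≠ 0}, |(k.1 : ℝ)| ^ (2 - 2 * θ) with hD
  refine ⟨Real.sqrt D / 2, fun t φ ψ hφ hψ => ?_⟩
  set A := hnorm 0 φ with hA
  set B := hnorm 0 ψ with hB
  have hA0 : 0 ≤ A := hnorm_nonneg 0 φ
  have hB0 : 0 ≤ B := hnorm_nonneg 0 ψ
  have hterm : ∀ k : {k : ℤ // k ≠ 0},
      wt (-θ) k.1 * ‖B1 t φ ψ k.1‖ ^ 2 ≤ |(k.1 : ℝ)| ^ (2 - 2 * θ) * ((A * B) ^ 2 / 4) := by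
    intro k
    have hx : (0 : ℝ) < |(k.1 : ℝ)| := abs_pos.mpr (Int.cast_ne_zero.mpr k.2)
    have hb := b1_pointwise t φ ψ hφ hψ k.1
    have hsq : ‖B1 t φ ψ k.1‖ ^ 2 ≤ (|(k.1 : ℝ)| / 2 * (A * B)) ^ 2 := by
      have h0 : (0 : ℝ) ≤ |(k.1 : ℝ)| / 2 * (A * B) := by positivity
      exact pow_le_pow_left₀ (norm_nonneg _) hb 2
    have hwt0 : 0 ≤ wt (-θ) k.1 := Real.rpow_nonneg (by positivity) _
    refine le_trans (mul_le_mul_of_nonneg_left hsq hwt0) (le_of_eq ?_)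
    have e1 : wt (-θ) k.1 = |(k.1 : ℝ)| ^ (2 * (-θ)) := by
      rw [wt, Int.cast_abs]
    rw [e1]
    have e2 : |(k.1 : ℝ)| ^ (2 * (-θ)) * (|(k.1 : ℝ)| / 2 * (A * B)) ^ 2
        = (|(k.1 : ℝ)| ^ (2 * (-θ)) * |(k.1 : ℝ)| ^ (2 : ℕ)) * ((A * B) ^ 2 / 4) := by
      ring
    rw [e2, ← Real.rpow_natCast |(k.1 : ℝ)| 2, ← Real.rpow_add hx]
    congr 2
    push_cast; ring
  have hnn : ∀ k : {k : ℤ // k ≠ 0}, 0 ≤ wt (-θ) k.1 * ‖B1 t φ ψ k.1‖ ^ 2 :=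
    fun k => mul_nonneg (Real.rpow_nonneg (by positivity) _) (sq_nonneg _)
  have hmaj : Summable (fun k : {k : ℤ // k ≠ 0} =>
      |(k.1 : ℝ)| ^ (2 - 2 * θ) * ((A * B) ^ 2 / 4)) := hsumr.mul_right _
  have hmem : memH (-θ) (B1 t φ ψ) := Summable.of_nonneg_of_le hnn hterm hmaj
  refine ⟨hmem, ?_⟩
  have htsum : (∑' k : {k : ℤ // k ≠ 0}, wt (-θ) k.1 * ‖B1 t φ ψ k.1‖ ^ 2)
      ≤ D * ((A * B) ^ 2 / 4) := by
    calc (∑' k : {k : ℤ // k ≠ 0}, wt (-θ) k.1 * ‖B1 t φ ψ k.1‖ ^ 2)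
        ≤ ∑' k : {k : ℤ // k ≠ 0}, |(k.1 : ℝ)| ^ (2 - 2 * θ) * ((A * B) ^ 2 / 4) :=
          Summable.tsum_le_tsum hterm hmem hmaj
      _ = D * ((A * B) ^ 2 / 4) := by rw [tsum_mul_right]
  have hfin : hnorm (-θ) (B1 t φ ψ) ≤ Real.sqrt (D * ((A * B) ^ 2 / 4)) := by
    rw [hnorm]
    exact Real.sqrt_le_sqrt htsum
  refine hfin.trans (le_of_eq ?_)
  rw [Real.sqrt_mul (tsum_nonneg fun k => Real.rpow_nonneg (by positivity) _)]
  have e3 : (A * B) ^ 2 / 4 = (A * B / 2) ^ 2 := by ring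
  rw [e3, Real.sqrt_sq (by positivity)]
  ring
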